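/- arXiv:0812.0489 — 2 statements merged into one kernel-verified Lean document; each statement's English description precedes it below -/
import Mathlib

section
/- Every compactly generated metrizable topological group G admits a sequence (s_n) converging to the identity 1 such that the subgroup generated by {s_n : n ∈ ℕ} is dense in G. -/
/-!
Fix a decreasing neighbourhood basis `u n` of `1` and finite sets `t n` with
`K ⊆ ⋃ g ∈ t n, (g * ·) ⁻¹' u n`. For `x ∈ K` pick `d n ∈ t n` with `d n * x ∈ u n`;
then `d n → x⁻¹`, and each consecutive quotient `d n / d (n + 1)` lies in the finite set
`(t n / t (n + 1)) ∩ (u n / u n)`. So `t 0` together with these small quotients is a countable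
set accumulating only at `1`; enumerating it gives a null sequence whose generated subgroup has
`K⁻¹`, hence `⟨K⟩ = G`, in its closure.
-/

open Filter Topology Pointwise Set

theorem Set.Countable.exists_tendsto_subset_range {X : Type*} [TopologicalSpace X] {S : Set X}
    {x : X} (hS : S.Countable) (hfin : ∀ W ∈ 𝓝 x, (S \ W).Finite) :
    ∃ s : ℕ → X, Tendsto s atTop (𝓝 x) ∧ S ⊆ range s := by
  have := hS.to_subtype
  obtain ⟨e, he⟩ := Countable.exists_injective_nat S
  refine ⟨Function.extend e (↑) fun _ => x, ?_, fun y hy => ⟨e ⟨y, hy⟩, he.extend_apply _ _ _⟩⟩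
  rw [← Nat.cofinite_eq_atTop]
  intro W hW
  refine ((hfin W hW).preimage Subtype.val_injective.injOn |>.image e).subset fun n hn => ?_
  by_cases hne : ∃ y, e y = n
  · obtain ⟨y, rfl⟩ := hne
    exact ⟨y, by simpa [he.extend_apply] using hn, rfl⟩
  · exact absurd (mem_of_mem_nhds hW) (by simpa [Function.extend_apply' _ _ _ hne] using hn)

section
variable {G : Type*} [Group G]

def chainSteps (t u : ℕ → Set G) : Set G :=
  t 0 ∪ ⋃ n, ((t n / t (n + 1)) ∩ (u n / u n))

theorem countable_chainSteps {t : ℕ → Set G} (ht : ∀ n, (t n).Finite) (u : ℕ → Set G) :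
    (chainSteps t u).Countable :=
  (ht 0).countable.union <| countable_iUnion fun n =>
    Countable.mono inter_subset_left ((ht n).div (ht (n + 1))).countable

variable [TopologicalSpace G] [IsTopologicalGroup G]

theorem finite_chainSteps_diff {t u : ℕ → Set G} (ht : ∀ n, (t n).Finite)
    (hu : (𝓝 (1 : G)).HasAntitoneBasis u) {W : Set G} (hW : W ∈ 𝓝 1) :
    (chainSteps t u \ W).Finite := by
  obtain ⟨V, hV, hVW⟩ := exists_nhds_split_inv hW
  obtain ⟨N, -, hN⟩ := hu.1.mem_iff.mp hV
  refine ((ht 0).union <| (finite_lt_nat N).biUnion fun n _ => (ht n).div (ht (n + 1))).subset ?_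
  rintro g ⟨hg0 | hg, hgW⟩
  · exact Or.inl hg0
  obtain ⟨n, hgt, a, ha, b, hb, hab⟩ := mem_iUnion.mp hg
  have hnN : n < N := not_le.mp fun hNn =>
    hgW (hab ▸ hVW a (hN (hu.2 hNn ha)) b (hN (hu.2 hNn hb)))
  exact Or.inr (mem_biUnion hnN hgt)

theorem inv_mem_closure_chainSteps {K : Set G} {t u : ℕ → Set G}
    (hu : (𝓝 (1 : G)).HasAntitoneBasis u) (hcover : ∀ n, K ⊆ ⋃ g ∈ t n, (g * ·) ⁻¹' u n)
    {x : G} (hx : x ∈ K) : x⁻¹ ∈ closure (Subgroup.closure (chainSteps t u) : Set G) := by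
  have hd : ∀ n, ∃ g ∈ t n, g * x ∈ u n := fun n => by simpa using hcover n hx
  choose d hdt hdu using hd
  have hdH : ∀ n, d n ∈ Subgroup.closure (chainSteps t u) := by
    intro n
    induction n with
    | zero => exact Subgroup.subset_closure (Or.inl (hdt 0))
    | succ n ih =>
      have hstep : d n / d (n + 1) ∈ chainSteps t u := by
        refine Or.inr (mem_iUnion.mpr ⟨n, Set.div_mem_div (hdt n) (hdt (n + 1)), ?_⟩)
        simpa using Set.div_mem_div (hdu n) (hu.2 n.le_succ (hdu (n + 1)))
      simpa using Subgroup.mul_mem _ (Subgroup.inv_mem _ (Subgroup.subset_closure hstep)) ih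
  have hlim : Tendsto d atTop (𝓝 x⁻¹) := by
    simpa using (hu.tendsto hdu).mul_const x⁻¹
  exact mem_closure_of_tendsto hlim (Eventually.of_forall hdH)

end

theorem stmt_8_general {G : Type*} [Group G] [TopologicalSpace G] [IsTopologicalGroup G]
    [TopologicalSpace.MetrizableSpace G]
    (K : Set G) (hK : IsCompact K) (hgen : Subgroup.closure K = ⊤) :
    ∃ s : ℕ → G, Tendsto s atTop (𝓝 1) ∧
      Dense (Subgroup.closure (Set.range s) : Set G) := by
  obtain ⟨u, hu⟩ := (𝓝 (1 : G)).exists_antitone_basis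
  have hcover n : ∃ t : Finset G, K ⊆ ⋃ g ∈ t, (g * ·) ⁻¹' u n :=
    compact_covered_by_mul_left_translates hK ⟨1, mem_interior_iff_mem_nhds.mpr (hu.mem n)⟩
  choose t ht using hcover
  set S := chainSteps (fun n => (t n : Set G)) u
  have htfin n : (t n : Set G).Finite := (t n).finite_toSet
  obtain ⟨s, hs, hSs⟩ := (countable_chainSteps htfin u).exists_tendsto_subset_range
    fun W hW => finite_chainSteps_diff htfin hu hW
  refine ⟨s, hs, Dense.mono (Subgroup.closure_mono hSs) ?_⟩
  have hKS : K ⊆ (Subgroup.closure S).topologicalClosure := fun x hx => by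
    rw [SetLike.mem_coe, ← inv_inv x]
    exact (Subgroup.closure S).topologicalClosure.inv_mem
      (inv_mem_closure_chainSteps hu (fun n => by simpa using ht n) hx)
  have htop : (Subgroup.closure S).topologicalClosure = ⊤ :=
    top_le_iff.mp (hgen ▸ (Subgroup.closure_le _).mpr hKS)
  rw [dense_iff_closure_eq, ← Subgroup.topologicalClosure_coe, htop, Subgroup.coe_top]

/-- Every compactly generated metrizable Hausdorff topological group `G` admits a sequence
converging to the identity whose range generates a dense subgroup of `G`. -/
theorem stmt_8 {G : Type*} [Group G] [TopologicalSpace G] [IsTopologicalGroup G] [T2Space G]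
    [TopologicalSpace.MetrizableSpace G]
    (K : Set G) (hK : IsCompact K) (hgen : Subgroup.closure K = ⊤) :
    ∃ s : ℕ → G, Tendsto s atTop (𝓝 1) ∧
      Dense (Subgroup.closure (Set.range s) : Set G) :=
  stmt_8_general K hK hgen
end

section
/- Let H be a locally compact Hausdorff topological group, G an open subgroup of H admitting a suitable set S, and X ⊆ H \ G a set of representatives of the distinct nontrivial left cosets of G in H (one representative per coset xG ⊆ H \ G). Then S ∪ X is a suitable set for H. -/
/-!
The cosets of the open subgroup `G` are open, so `H ⧸ G` is discrete; as `X` meets each fibre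
of `H → H ⧸ G` at most once and points of `H` are closed, `X` is closed and discrete. Since `G`
is clopen, the discrete sets `S ⊆ G` and `X ⊆ Gᶜ` stay apart even after taking closures, so
their union is discrete, and `S ∪ {1} ∪ X` is closed as a union of two closed sets. Finally
the closure of the subgroup generated by `S ∪ X` contains `G` (as `S` is suitable for `G`) and
a point of every coset of `G`, hence is all of `H`.
-/

open Set Topology

/-- A suitable set for a topological group `H`: a subset `S` that is discrete (in the
subspace topology), with `S ∪ {1}` closed in `H`, and generating a dense subgroup. -/
def IsSuitableSet (H : Type*) [Group H] [TopologicalSpace H] (S : Set H) : Prop :=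
  DiscreteTopology ↥S ∧ IsClosed (S ∪ {1}) ∧ Dense (Subgroup.closure S : Set H)

section Topology

variable {α : Type*} [TopologicalSpace α]

lemma IsDiscrete.union_of_disjoint_closure {s t : Set α} (hs : IsDiscrete s)
    (ht : IsDiscrete t) (hst : Disjoint s (closure t)) (hts : Disjoint (closure s) t) :
    IsDiscrete (s ∪ t) := by
  refine isDiscrete_iff_nhdsWithin.2 fun x hx => ?_
  rw [nhdsWithin_union]
  rcases hx with hx | hx
  · rw [notMem_closure_iff_nhdsWithin_eq_bot.1 (hst.notMem_of_mem_left hx), sup_bot_eq,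
      isDiscrete_iff_nhdsWithin.1 hs x hx]
  · rw [notMem_closure_iff_nhdsWithin_eq_bot.1 (hts.notMem_of_mem_right hx), bot_sup_eq,
      isDiscrete_iff_nhdsWithin.1 ht x hx]

lemma isClosed_and_isDiscrete_of_injOn [T1Space α] {β : Type*} [TopologicalSpace β]
    [DiscreteTopology β] {f : α → β} (hf : Continuous f) {X : Set α} (hX : X.InjOn f) :
    IsClosed X ∧ IsDiscrete X := by
  refine isClosed_and_discrete_iff.2 fun x => Filter.disjoint_principal_right.2 ?_
  have hfiber : ∀ᶠ y in 𝓝[≠] x, f y = f x :=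
    nhdsWithin_le_nhds (hf.continuousAt (isOpen_discrete {f x} |>.mem_nhds rfl))
  by_cases hmeet : ∃ a ∈ X, f a = f x
  · obtain ⟨a, haX, hax⟩ := hmeet
    have hne : ∀ᶠ y in 𝓝[≠] x, y ≠ a := by
      rcases eq_or_ne x a with rfl | hxa
      · exact self_mem_nhdsWithin
      · exact eventually_ne_nhdsWithin hxa
    filter_upwards [hfiber, hne] with y hy hya hyX
    exact hya (hX hyX haX (hy.trans hax.symm))
  · filter_upwards [hfiber] with y hy hyX
    exact hmeet ⟨y, hyX, hy⟩

end Topology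

section CosetRepresentatives

variable {H : Type*} [Group H] {G : Subgroup H} {X : Set H}

lemma injOn_mk_of_unique_rep (hXG : X ⊆ (G : Set H)ᶜ)
    (hrep : ∀ h : H, h ∉ G → ∃! x, x ∈ X ∧ x⁻¹ * h ∈ G) :
    X.InjOn (QuotientGroup.mk : H → H ⧸ G) := by
  intro x hx y hy hxy
  obtain ⟨z, -, huniq⟩ := hrep y (hXG hy)
  rw [huniq x ⟨hx, QuotientGroup.eq.1 hxy⟩,
    huniq y ⟨hy, by rw [inv_mul_cancel]; exact G.one_mem⟩]

lemma Subgroup.eq_top_of_le_of_forall_exists_inv_mul_mem {K : Subgroup H} (hGK : G ≤ K)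
    (hK : ∀ h : H, h ∉ G → ∃ x ∈ K, x⁻¹ * h ∈ G) : K = ⊤ := by
  refine eq_top_iff.2 fun h _ => ?_
  by_cases hhG : h ∈ G
  · exact hGK hhG
  · obtain ⟨x, hxK, hxh⟩ := hK h hhG
    simpa using K.mul_mem hxK (hGK hxh)

end CosetRepresentatives

lemma Subgroup.le_topologicalClosure_closure_image_val {H : Type*} [Group H] [TopologicalSpace H]
    [IsTopologicalGroup H] {G : Subgroup H} {S : Set G}
    (hS : Dense (Subgroup.closure S : Set G)) :
    G ≤ (Subgroup.closure (Subtype.val '' S)).topologicalClosure := by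
  have hmap :
      Subtype.val '' (Subgroup.closure S : Set G) = Subgroup.closure (Subtype.val '' S) := by
    change G.subtype '' _ = _
    rw [← Subgroup.coe_map, MonoidHom.map_closure]
    rfl
  intro g hg
  change g ∈ ((Subgroup.closure (Subtype.val '' S)).topologicalClosure : Set H)
  rw [Subgroup.topologicalClosure_coe, ← hmap]
  exact Subtype.dense_iff.1 hS hg

theorem stmt_18_general {H : Type*} [Group H] [TopologicalSpace H] [IsTopologicalGroup H] [T2Space H]
    (G : Subgroup H) (hGopen : IsOpen (G : Set H))
    (S : Set G) (hS : IsSuitableSet G S)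
    (X : Set H) (hXG : X ⊆ (G : Set H)ᶜ)
    (hrep : ∀ h : H, h ∉ G → ∃! x, x ∈ X ∧ x⁻¹ * h ∈ G) :
    IsSuitableSet H ((Subtype.val '' S) ∪ X) := by
  obtain ⟨hSdisc, hSclosed, hSdense⟩ := hS
  have hGclosed : IsClosed (G : Set H) := G.isClosed_of_isOpen hGopen
  have hSG : Subtype.val '' S ⊆ G := by rintro _ ⟨s, -, rfl⟩; exact s.2
  have := QuotientGroup.discreteTopology hGopen
  obtain ⟨hXclosed, hXdisc⟩ :=
    isClosed_and_isDiscrete_of_injOn QuotientGroup.continuous_mk (injOn_mk_of_unique_rep hXG hrep)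
  refine ⟨?_, ?_, ?_⟩
  · refine isDiscrete_iff_discreteTopology.1 <| IsDiscrete.union_of_disjoint_closure
      ((isDiscrete_iff_discreteTopology.2 hSdisc).image .subtypeVal) hXdisc ?_ ?_
    · exact disjoint_compl_right.mono hSG (closure_minimal hXG hGopen.isClosed_compl)
    · exact disjoint_compl_right.mono (closure_minimal hSG hGclosed) hXG
  · have himage : Subtype.val '' (S ∪ {1}) = Subtype.val '' S ∪ {1} := by
      rw [image_union, image_singleton, OneMemClass.coe_one]
    rw [union_right_comm, ← himage]
    exact (hGclosed.isClosedEmbedding_subtypeVal.isClosed_iff_image_isClosed.1 hSclosed).union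
      hXclosed
  · set K := (Subgroup.closure (Subtype.val '' S ∪ X)).topologicalClosure
    have hGK : G ≤ K := (Subgroup.le_topologicalClosure_closure_image_val hSdense).trans
      (Subgroup.topologicalClosure_mono (Subgroup.closure_mono subset_union_left))
    have hKtop : K = ⊤ := Subgroup.eq_top_of_le_of_forall_exists_inv_mul_mem hGK fun h hh =>
      let ⟨x, ⟨hxX, hxh⟩, _⟩ := hrep h hh
      ⟨x, Subgroup.le_topologicalClosure _ (Subgroup.subset_closure (Or.inr hxX)), hxh⟩
    rw [dense_iff_closure_eq, ← Subgroup.topologicalClosure_coe]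
    exact congrArg SetLike.coe hKtop

/-- Let `H` be a locally compact Hausdorff topological group, `G` an open subgroup of `H`
having a suitable set `S`, and `X ⊆ H \ G` a set containing exactly one representative of
each left coset of `G` contained in `H \ G`. Then `S ∪ X` is a suitable set for `H`. -/
theorem stmt_18 {H : Type*} [Group H] [TopologicalSpace H] [IsTopologicalGroup H] [T2Space H]
    [LocallyCompactSpace H]
    (G : Subgroup H) (hGopen : IsOpen (G : Set H))
    (S : Set G) (hS : IsSuitableSet G S)
    (X : Set H) (hXG : X ⊆ (G : Set H)ᶜ)
    (hrep : ∀ h : H, h ∉ G → ∃! x, x ∈ X ∧ x⁻¹ * h ∈ G) :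
    IsSuitableSet H ((Subtype.val '' S) ∪ X) :=
  stmt_18_general G hGopen S hS X hXG hrep
end
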